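/- arXiv:2004.01937 — 2 statements merged into one kernel-verified Lean document; each statement's English description precedes it below -/
import Mathlib

section
/- For the one-sided instance W = 1000, w = (300, 340), q = (15, 15) (produce at least 15 of each, no upper bounds): the minimum possible total waste is achieved only by solutions using at least 14 master items, while the minimum number of master items over all feasible solutions is 10. Hence minimising waste forces at least 40% more master items than the minimum. -/
/-- A pattern for master size 1000 with sizes (300, 340). -/
def ValidPattern (a : Fin 2 → ℕ) : Prop :=
  300 * a 0 + 340 * a 1 ≤ 1000

/-- One-sided feasibility: at least 15 items of each of the two sizes. -/
def Feasible (x : (Fin 2 → ℕ) →₀ ℕ) : Prop :=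
  (∀ a ∈ x.support, ValidPattern a) ∧
  15 ≤ x.sum (fun a c => c * a 0) ∧
  15 ≤ x.sum (fun a c => c * a 1)

/-- Total waste of a solution. -/
def waste (x : (Fin 2 → ℕ) →₀ ℕ) : ℕ :=
  x.sum (fun a c => c * (1000 - (300 * a 0 + 340 * a 1)))

/-- Number of master items used. -/
def masters (x : (Fin 2 → ℕ) →₀ ℕ) : ℕ :=
  x.sum (fun _ c => c)

lemma feasible_two_singles (p q : Fin 2 → ℕ) (hp : ValidPattern p) (hq : ValidPattern q)
    (cp cq : ℕ)
    (h0 : 15 ≤ cp * p 0 + cq * q 0) (h1 : 15 ≤ cp * p 1 + cq * q 1) :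
    Feasible (Finsupp.single p cp + Finsupp.single q cq) := by
  refine ⟨?_, ?_, ?_⟩
  · intro a ha
    have := Finsupp.support_add ha
    rcases Finset.mem_union.1 this with h | h
    · have := Finsupp.support_single_subset h
      simp only [Finset.mem_singleton] at this
      subst this; exact hp
    · have := Finsupp.support_single_subset h
      simp only [Finset.mem_singleton] at this
      subst this; exact hq
  · rw [Finsupp.sum_add_index' (fun a => by simp) (fun a b1 b2 => by ring)]
    rw [Finsupp.sum_single_index (by simp), Finsupp.sum_single_index (by simp)]
    exact h0
  · rw [Finsupp.sum_add_index' (fun a => by simp) (fun a b1 b2 => by ring)]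
    rw [Finsupp.sum_single_index (by simp), Finsupp.sum_single_index (by simp)]
    exact h1

/-- for the one-sided instance W = 1000, w = (300,340), q = (15,15),
every waste-minimal solution uses at least 14 master items, while the minimum
number of master items over all feasible solutions is 10; thus minimising waste
forces at least 40% more master items than the minimum. -/
theorem stmt5 :
    (∀ x, Feasible x → (∀ y, Feasible y → waste x ≤ waste y) → 14 ≤ masters x) ∧
    IsLeast {n : ℕ | ∃ x, Feasible x ∧ masters x = n} 10 ∧
    ((14 : ℚ) / 10 = 1 + 40 / 100) := by
  refine ⟨?_, ⟨?_, ?_⟩, by norm_num⟩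
  · -- waste-minimal ⇒ at least 14 masters
    intro x hx hmin
    -- the witness: 15 copies of pattern (1,2)
    have hp : ValidPattern ![1, 2] := by
      simp [ValidPattern, Matrix.cons_val_zero, Matrix.cons_val_one, Matrix.head_cons]
    have hyF : Feasible (Finsupp.single ![(1:ℕ), 2] 15 + Finsupp.single ![(1:ℕ), 2] 0) := by
      apply feasible_two_singles _ _ hp hp
      · simp [Matrix.cons_val_zero]
      · simp [Matrix.cons_val_one, Matrix.head_cons]
    have hwy : waste (Finsupp.single ![(1:ℕ), 2] 15 + Finsupp.single ![(1:ℕ), 2] 0) = 300 := by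
      unfold waste
      rw [Finsupp.sum_add_index' (fun a => by simp) (fun a b1 b2 => by ring)]
      rw [Finsupp.sum_single_index (by simp), Finsupp.sum_single_index (by simp)]
      simp [Matrix.cons_val_zero, Matrix.cons_val_one, Matrix.head_cons]
    have hwx : waste x ≤ 300 := hwy ▸ hmin _ hyF
    -- pointwise: 40 * (c * a 0) ≤ c * wastep + 20 * c for every valid pattern
    have key : 40 * x.sum (fun a c => c * a 0) ≤ waste x + 20 * masters x := by
      unfold waste masters Finsupp.sum
      rw [Finset.mul_sum, Finset.mul_sum, ← Finset.sum_add_distrib]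
      apply Finset.sum_le_sum
      intro a ha
      have hv := hx.1 a ha
      unfold ValidPattern at hv
      have h : 40 * a 0 ≤ (1000 - (300 * a 0 + 340 * a 1)) + 20 := by omega
      calc 40 * (x a * a 0) = x a * (40 * a 0) := by ring
        _ ≤ x a * ((1000 - (300 * a 0 + 340 * a 1)) + 20) := Nat.mul_le_mul_left _ h
        _ = x a * (1000 - (300 * a 0 + 340 * a 1)) + 20 * x a := by ring
    have hs0 := hx.2.1
    have h600 : 40 * 15 ≤ 40 * x.sum (fun a c => c * a 0) := Nat.mul_le_mul_left _ hs0
    linarith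
  · -- a feasible solution with 10 masters: 5×(2,1) + 5×(1,2)
    refine ⟨Finsupp.single ![2, 1] 5 + Finsupp.single ![1, 2] 5, ?_, ?_⟩
    · apply feasible_two_singles
      · simp [ValidPattern, Matrix.cons_val_zero, Matrix.cons_val_one, Matrix.head_cons]
      · simp [ValidPattern, Matrix.cons_val_zero, Matrix.cons_val_one, Matrix.head_cons]
      · simp [Matrix.cons_val_zero]
      · simp [Matrix.cons_val_one, Matrix.head_cons]
    · unfold masters
      rw [Finsupp.sum_add_index' (fun a => rfl) (fun a b1 b2 => rfl)]
      rw [Finsupp.sum_single_index rfl, Finsupp.sum_single_index rfl]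
  · -- lower bound: every feasible solution uses at least 10 masters
    rintro n ⟨x, hx, rfl⟩
    have key : 300 * x.sum (fun a c => c * a 0) + 340 * x.sum (fun a c => c * a 1)
        ≤ 1000 * masters x := by
      unfold masters Finsupp.sum
      rw [Finset.mul_sum, Finset.mul_sum, Finset.mul_sum, ← Finset.sum_add_distrib]
      apply Finset.sum_le_sum
      intro a ha
      have hv := hx.1 a ha
      unfold ValidPattern at hv
      calc 300 * (x a * a 0) + 340 * (x a * a 1)
          = x a * (300 * a 0 + 340 * a 1) := by ring
        _ ≤ x a * 1000 := Nat.mul_le_mul_left _ hv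
        _ = 1000 * x a := by ring
    have h0 : 300 * 15 ≤ 300 * x.sum (fun a c => c * a 0) := Nat.mul_le_mul_left _ hx.2.1
    have h1 : 340 * 15 ≤ 340 * x.sum (fun a c => c * a 1) := Nat.mul_le_mul_left _ hx.2.2
    linarith
end

section
/- Let n be the minimum number of master items for a one-sided instance (demands q_j, no upper bounds) and let n' be the number of master items in some waste-minimal solution of the same instance. Then it is not true in general that n' ≤ n: there exists an instance (W = 1000, w = (300, 340), q = (15, 15)) where n = 10 but every waste-minimal solution has n' ≥ 14. -/
lemma key (x : (Fin 2 → ℕ) →₀ ℕ) (h : ∀ a ∈ x.support, ValidPattern a) :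
    40 * x.sum (fun a c => c * a 0) ≤ waste x + 20 * masters x := by
  unfold waste masters Finsupp.sum
  rw [Finset.mul_sum, Finset.mul_sum, ← Finset.sum_add_distrib]
  apply Finset.sum_le_sum
  intro a ha
  have hv := h a ha
  unfold ValidPattern at hv
  have h1 : 40 * a 0 ≤ 1000 - (300 * a 0 + 340 * a 1) + 20 := by omega
  calc 40 * (x a * a 0) = x a * (40 * a 0) := by ring
    _ ≤ x a * (1000 - (300 * a 0 + 340 * a 1) + 20) := Nat.mul_le_mul_left _ h1
    _ = x a * (1000 - (300 * a 0 + 340 * a 1)) + 20 * x a := by ring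

lemma cap (x : (Fin 2 → ℕ) →₀ ℕ) (h : ∀ a ∈ x.support, ValidPattern a) :
    x.sum (fun a c => c * a 0) + x.sum (fun a c => c * a 1) ≤ 3 * masters x := by
  unfold masters Finsupp.sum
  rw [Finset.mul_sum, ← Finset.sum_add_distrib]
  apply Finset.sum_le_sum
  intro a ha
  have hv := h a ha
  unfold ValidPattern at hv
  have h1 : a 0 + a 1 ≤ 3 := by omega
  calc x a * a 0 + x a * a 1 = x a * (a 0 + a 1) := by ring
    _ ≤ x a * 3 := Nat.mul_le_mul_left _ h1
    _ = 3 * x a := by ring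

/-- The witness for n = 10. -/
noncomputable def x10 : (Fin 2 → ℕ) →₀ ℕ :=
  Finsupp.single ![2,1] 5 + Finsupp.single ![1,2] 5

lemma hne : (![2,1] : Fin 2 → ℕ) ≠ ![1,2] := by
  intro h; have := congrFun h 0; simp at this

lemma x10_sum (g : (Fin 2 → ℕ) → ℕ) :
    x10.sum (fun a c => c * g a) = 5 * g ![2,1] + 5 * g ![1,2] := by
  unfold x10
  rw [Finsupp.sum_add_index' (fun a => zero_mul (g a)) (fun a b1 b2 => add_mul b1 b2 (g a)),
    Finsupp.sum_single_index (h := fun a c => c * g a) (zero_mul _),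
    Finsupp.sum_single_index (h := fun a c => c * g a) (zero_mul _)]

lemma x10_feasible : Feasible x10 := by
  refine ⟨?_, ?_, ?_⟩
  · intro a ha
    have := Finsupp.support_add ha
    simp only [Finset.mem_union] at this
    rcases this with h | h <;>
      [ (have := Finsupp.support_single_subset h);
        (have := Finsupp.support_single_subset h)] <;>
      simp only [Finset.mem_singleton] at this <;> subst this <;>
      unfold ValidPattern <;> simp
  · rw [x10_sum (fun a => a 0)]; simp
  · rw [x10_sum (fun a => a 1)]; simp

lemma x10_masters : masters x10 = 10 := by
  unfold masters x10
  rw [Finsupp.sum_add_index' (fun a => rfl) (fun a b1 b2 => rfl),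
    Finsupp.sum_single_index (h := fun _ c => c) rfl,
    Finsupp.sum_single_index (h := fun _ c => c) rfl]

/-- Waste-minimal witness: 15 copies of (1,2). -/
noncomputable def y15 : (Fin 2 → ℕ) →₀ ℕ := Finsupp.single ![1,2] 15

lemma y15_sum (g : (Fin 2 → ℕ) → ℕ) :
    y15.sum (fun a c => c * g a) = 15 * g ![1,2] := by
  unfold y15; rw [Finsupp.sum_single_index (h := fun a c => c * g a) (zero_mul _)]

lemma y15_feasible : Feasible y15 := by
  refine ⟨?_, ?_, ?_⟩
  · intro a ha
    have := Finsupp.support_single_subset ha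
    simp only [Finset.mem_singleton] at this; subst this
    unfold ValidPattern; simp
  · rw [y15_sum (fun a => a 0)]; simp
  · rw [y15_sum (fun a => a 1)]; simp

lemma y15_waste : waste y15 = 300 := by
  unfold waste
  rw [y15_sum (fun a => 1000 - (300 * a 0 + 340 * a 1))]
  norm_num

/-- the number of master items n' in a waste-minimal solution need
not be ≤ the minimum number of master items n: for the one-sided instance
W = 1000, w = (300, 340), q = (15, 15) the minimum master-item count is n = 10,
yet every waste-minimal solution uses at least 14 master items. -/
theorem stmt19 :
    IsLeast {n : ℕ | ∃ x, Feasible x ∧ masters x = n} 10 ∧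
    (∀ x, Feasible x → (∀ y, Feasible y → waste x ≤ waste y) → 14 ≤ masters x) := by
  constructor
  · constructor
    · exact ⟨x10, x10_feasible, x10_masters⟩
    · rintro n ⟨x, ⟨hs, h1, h2⟩, rfl⟩
      have hc := cap x hs
      linarith
  · rintro x ⟨hs, h1, h2⟩ hmin
    have hwx : waste x ≤ 300 := y15_waste ▸ hmin y15 y15_feasible
    have hk := key x hs
    linarith
end
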